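/- arXiv:math/0610808 — 2 statements merged into one kernel-verified Lean document; each statement's English description precedes it below -/
import Mathlib

section
/- Let T > 0 be fixed. Then τ+(x) < T for every x ∈ Ω if and only if τ−(x) < T for every x ∈ Ω. -/
open MeasureTheory Set Filter Topology
open scoped ENNReal NNReal

noncomputable section

/-- Forward exit time of the flow `Φ` from `Ω` (`∞` if the forward curve never leaves `Ω`). -/
def tauP {N : ℕ} (Ω : Set (Fin N → ℝ)) (Φ : (Fin N → ℝ) → ℝ → (Fin N → ℝ))
    (x : Fin N → ℝ) : ℝ≥0∞ :=
  sInf {s : ℝ≥0∞ | ∃ r : ℝ, 0 < r ∧ s = ENNReal.ofReal r ∧ Φ x r ∉ Ω}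

/-- Backward exit time of the flow `Φ` from `Ω`. -/
def tauM {N : ℕ} (Ω : Set (Fin N → ℝ)) (Φ : (Fin N → ℝ) → ℝ → (Fin N → ℝ))
    (x : Fin N → ℝ) : ℝ≥0∞ :=
  sInf {s : ℝ≥0∞ | ∃ r : ℝ, 0 < r ∧ s = ENNReal.ofReal r ∧ Φ x (-r) ∉ Ω}

/-- `∫_0^τ g(s) ds`, over `(0,∞)` when `τ = ∞`. -/
def curveInt (g : ℝ → ℝ) (τ : ℝ≥0∞) : ℝ :=
  ∫ s in {s : ℝ | 0 < s ∧ ENNReal.ofReal s < τ}, g s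

/-- The incoming part `Γ₋` of the boundary `∂Ω`. -/
def GammaM {N : ℕ} (Ω : Set (Fin N → ℝ)) (Φ : (Fin N → ℝ) → ℝ → (Fin N → ℝ)) :
    Set (Fin N → ℝ) :=
  {y ∈ frontier Ω | ∃ x ∈ Ω, tauM Ω Φ x < ⊤ ∧ y = Φ x (-(tauM Ω Φ x).toReal)}

/-- The outgoing part `Γ₊` of the boundary `∂Ω`. -/
def GammaP {N : ℕ} (Ω : Set (Fin N → ℝ)) (Φ : (Fin N → ℝ) → ℝ → (Fin N → ℝ)) :
    Set (Fin N → ℝ) :=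
  {y ∈ frontier Ω | ∃ x ∈ Ω, tauP Ω Φ x < ⊤ ∧ y = Φ x ((tauP Ω Φ x).toReal)}

/-- The boundary measures `μ∓` satisfy the integration-along-characteristics identities. -/
def IsBoundaryMeasures {N : ℕ} (Ω : Set (Fin N → ℝ)) (Φ : (Fin N → ℝ) → ℝ → (Fin N → ℝ))
    (μ μm μp : Measure (Fin N → ℝ)) : Prop :=
  ∀ f : (Fin N → ℝ) → ℝ, Integrable f (μ.restrict Ω) →
    (∫ x in {x ∈ Ω | tauM Ω Φ x < ⊤}, f x ∂μ
        = ∫ y in GammaM Ω Φ, curveInt (fun s => f (Φ y s)) (tauP Ω Φ y) ∂μm) ∧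
    (∫ x in {x ∈ Ω | tauP Ω Φ x < ⊤}, f x ∂μ
        = ∫ y in GammaP Ω Φ, curveInt (fun s => f (Φ y (-s))) (tauM Ω Φ y) ∂μp)

/-- The identities of Lemma `defmu+-` (beals1 and beals2). -/
def BealsProperty {N : ℕ} (Ω : Set (Fin N → ℝ)) (Φ : (Fin N → ℝ) → ℝ → (Fin N → ℝ))
    (μ μm μp : Measure (Fin N → ℝ)) : Prop :=
  ∀ T : ℝ, 0 < T → ∀ f : ((Fin N → ℝ) × ℝ) → ℝ,
    Integrable f ((μ.restrict Ω).prod (volume.restrict (Ioo (0 : ℝ) T))) →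
    (∫ p, f p ∂((μ.restrict Ω).prod (volume.restrict (Ioo (0 : ℝ) T)))
        = (∫ t in Ioo (0 : ℝ) T, (∫ y in GammaP Ω Φ,
            (∫ s in Ioo (0 : ℝ) ((tauM Ω Φ y ⊓ ENNReal.ofReal t).toReal),
              f (Φ y (-s), t - s)) ∂μp))
          + ∫ x in Ω, (∫ s in Ioo (0 : ℝ) ((tauM Ω Φ x ⊓ ENNReal.ofReal T).toReal),
              f (Φ x (-s), T - s)) ∂μ)
    ∧ (∫ p, f p ∂((μ.restrict Ω).prod (volume.restrict (Ioo (0 : ℝ) T)))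
        = (∫ t in Ioo (0 : ℝ) T, (∫ y in GammaM Ω Φ,
            (∫ s in Ioo (0 : ℝ) ((tauP Ω Φ y ⊓ ENNReal.ofReal (T - t)).toReal),
              f (Φ y s, t + s)) ∂μm))
          + ∫ x in Ω, (∫ s in Ioo (0 : ℝ) ((tauP Ω Φ x ⊓ ENNReal.ofReal T).toReal),
              f (Φ x s, s)) ∂μ)

/-- The class `𝔜` of test functions, together with the derivative `Dψ` along the flow. -/
structure IsTestFun {N : ℕ} (Ω : Set (Fin N → ℝ)) (Φ : (Fin N → ℝ) → ℝ → (Fin N → ℝ))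
    (ψ Dψ : (Fin N → ℝ) → ℝ) : Prop where
  measurable : Measurable ψ
  bounded : ∃ C, ∀ x, |ψ x| ≤ C
  compact_support : ∃ K : Set (Fin N → ℝ), IsCompact K ∧ K ⊆ Ω ∧ ∀ x ∉ K, ψ x = 0
  smooth : ∀ x ∈ Ω, ContDiffOn ℝ 1 (fun s => ψ (Φ x s))
      {s : ℝ | ENNReal.ofReal s < tauP Ω Φ x ∧ ENNReal.ofReal (-s) < tauM Ω Φ x}
  hasDeriv : ∀ x ∈ Ω, HasDerivAt (fun s => ψ (Φ x s)) (Dψ x) 0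
  measurableD : Measurable Dψ
  boundedD : ∃ C, ∀ x, |Dψ x| ≤ C

/-- `f ∈ D(T_max)` with `T_max f = g`. -/
def InDomTmax {N : ℕ} (Ω : Set (Fin N → ℝ)) (Φ : (Fin N → ℝ) → ℝ → (Fin N → ℝ))
    (μ : Measure (Fin N → ℝ)) (f g : (Fin N → ℝ) → ℝ) : Prop :=
  Integrable f (μ.restrict Ω) ∧ Integrable g (μ.restrict Ω) ∧
    ∀ ψ Dψ : (Fin N → ℝ) → ℝ, IsTestFun Ω Φ ψ Dψ →
      ∫ x in Ω, g x * ψ x ∂μ = ∫ x in Ω, f x * Dψ x ∂μ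

/-- A sequence of one-dimensional mollifiers supported in `[0, 1/n]`. -/
def IsMollifier (ρ : ℕ → ℝ → ℝ) : Prop :=
  ∀ n : ℕ, ContDiff ℝ (⊤ : ℕ∞) (ρ n) ∧ (∀ s, 0 ≤ ρ n s) ∧
    (∀ s, s ∉ Icc (0 : ℝ) (1 / (n + 1 : ℝ)) → ρ n s = 0) ∧ (∫ s, ρ n s) = 1

/-- Mollification along the characteristic curves. -/
def moll {N : ℕ} (Ω : Set (Fin N → ℝ)) (Φ : (Fin N → ℝ) → ℝ → (Fin N → ℝ))
    (ρ : ℝ → ℝ) (f : (Fin N → ℝ) → ℝ) (x : Fin N → ℝ) : ℝ :=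
  curveInt (fun s => ρ s * f (Φ x (-s))) (tauM Ω Φ x)

/-- The lifted flow `Ψ(ξ,s) = (Φ(ξ₁,s), ξ₂+s)` on `Ω × (0,T)`. -/
def lflow {N : ℕ} (Φ : (Fin N → ℝ) → ℝ → (Fin N → ℝ)) (ξ : (Fin N → ℝ) × ℝ) (s : ℝ) :
    (Fin N → ℝ) × ℝ := (Φ ξ.1 s, ξ.2 + s)

/-- Forward exit time `ℓ₊` of the lifted flow. -/
def ellP {N : ℕ} (Ω : Set (Fin N → ℝ)) (Φ : (Fin N → ℝ) → ℝ → (Fin N → ℝ)) (T : ℝ)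
    (ξ : (Fin N → ℝ) × ℝ) : ℝ≥0∞ := tauP Ω Φ ξ.1 ⊓ ENNReal.ofReal (T - ξ.2)

/-- Backward exit time `ℓ₋` of the lifted flow. -/
def ellM {N : ℕ} (Ω : Set (Fin N → ℝ)) (Φ : (Fin N → ℝ) → ℝ → (Fin N → ℝ))
    (ξ : (Fin N → ℝ) × ℝ) : ℝ≥0∞ := tauM Ω Φ ξ.1 ⊓ ENNReal.ofReal ξ.2

/-- The incoming part `Σ₋,T` of the boundary of `Ω × (0,T)`. -/
def SigmaM {N : ℕ} (Ω : Set (Fin N → ℝ)) (Φ : (Fin N → ℝ) → ℝ → (Fin N → ℝ)) (T : ℝ) :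
    Set ((Fin N → ℝ) × ℝ) :=
  {ζ ∈ frontier (Ω ×ˢ Ioo (0 : ℝ) T) |
    ∃ ξ ∈ Ω ×ˢ Ioo (0 : ℝ) T, ζ = lflow Φ ξ (-(ellM Ω Φ ξ).toReal)}

/-- The outgoing part `Σ₊,T` of the boundary of `Ω × (0,T)`. -/
def SigmaP {N : ℕ} (Ω : Set (Fin N → ℝ)) (Φ : (Fin N → ℝ) → ℝ → (Fin N → ℝ)) (T : ℝ) :
    Set ((Fin N → ℝ) × ℝ) :=
  {ζ ∈ frontier (Ω ×ˢ Ioo (0 : ℝ) T) |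
    ∃ ξ ∈ Ω ×ˢ Ioo (0 : ℝ) T, ζ = lflow Φ ξ ((ellP Ω Φ T ξ).toReal)}

/-- The semigroup `U₀(t)` with no re-entry boundary conditions. -/
def U0 {N : ℕ} (Ω : Set (Fin N → ℝ)) (Φ : (Fin N → ℝ) → ℝ → (Fin N → ℝ)) (t : ℝ)
    (f : (Fin N → ℝ) → ℝ) (x : Fin N → ℝ) : ℝ :=
  if ENNReal.ofReal t < tauM Ω Φ x then f (Φ x (-t)) else 0

/-- `x ↦ ∫_0^{τ₋(x)} e^{-λ t} g(Φ(x,-t)) dt`. -/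
def resolv {N : ℕ} (Ω : Set (Fin N → ℝ)) (Φ : (Fin N → ℝ) → ℝ → (Fin N → ℝ)) (lam : ℝ)
    (g : (Fin N → ℝ) → ℝ) (x : Fin N → ℝ) : ℝ :=
  curveInt (fun t => Real.exp (-(lam * t)) * g (Φ x (-t))) (tauM Ω Φ x)

/-- The candidate solution of the boundary value problem `(λ - T_max) f = g`, `B⁻ f = u`. -/
def bvpSol {N : ℕ} (Ω : Set (Fin N → ℝ)) (Φ : (Fin N → ℝ) → ℝ → (Fin N → ℝ)) (lam : ℝ)
    (g u : (Fin N → ℝ) → ℝ) (x : Fin N → ℝ) : ℝ :=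
  resolv Ω Φ lam g x +
    (if tauM Ω Φ x < ⊤ then
      Real.exp (-(lam * (tauM Ω Φ x).toReal)) * u (Φ x (-(tauM Ω Φ x).toReal)) else 0)

/-- `f` has incoming trace `u` on `Γ₋`, via an absolutely continuous representative
(along the characteristics, with derivative `-g`). -/
def IsTraceM {N : ℕ} (Ω : Set (Fin N → ℝ)) (Φ : (Fin N → ℝ) → ℝ → (Fin N → ℝ))
    (μ μm : Measure (Fin N → ℝ)) (f g u : (Fin N → ℝ) → ℝ) : Prop :=
  ∃ fs : (Fin N → ℝ) → ℝ, fs =ᵐ[μ.restrict Ω] f ∧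
    (∀ᵐ x ∂μ.restrict Ω, ∀ t₁ t₂ : ℝ, t₁ ≤ t₂ →
      ENNReal.ofReal (-t₁) < tauM Ω Φ x → ENNReal.ofReal t₂ < tauP Ω Φ x →
      fs (Φ x t₁) - fs (Φ x t₂) = ∫ s in t₁..t₂, g (Φ x s)) ∧
    ∀ᵐ y ∂μm.restrict (GammaM Ω Φ),
      Tendsto (fun t => fs (Φ y t)) (𝓝[>] (0 : ℝ)) (𝓝 (u y))

/-- `f` has outgoing trace `w` on `Γ₊`. -/
def IsTraceP {N : ℕ} (Ω : Set (Fin N → ℝ)) (Φ : (Fin N → ℝ) → ℝ → (Fin N → ℝ))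
    (μ μp : Measure (Fin N → ℝ)) (f g w : (Fin N → ℝ) → ℝ) : Prop :=
  ∃ fs : (Fin N → ℝ) → ℝ, fs =ᵐ[μ.restrict Ω] f ∧
    (∀ᵐ x ∂μ.restrict Ω, ∀ t₁ t₂ : ℝ, t₁ ≤ t₂ →
      ENNReal.ofReal (-t₁) < tauM Ω Φ x → ENNReal.ofReal t₂ < tauP Ω Φ x →
      fs (Φ x t₁) - fs (Φ x t₂) = ∫ s in t₁..t₂, g (Φ x s)) ∧
    ∀ᵐ y ∂μp.restrict (GammaP Ω Φ),
      Tendsto (fun t => fs (Φ y (-t))) (𝓝[>] (0 : ℝ)) (𝓝 (w y))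

/-- Auxiliary one-sided lemma for an abstract flow satisfying the group law. -/
lemma stmt2_aux {N : ℕ} (Φ : (Fin N → ℝ) → ℝ → (Fin N → ℝ))
    (hΦ0 : ∀ x, Φ x 0 = x)
    (hg : ∀ x t s, Φ (Φ x t) s = Φ x (t + s))
    (hc : ∀ x, Continuous (Φ x))
    (Ω : Set (Fin N → ℝ)) (hΩ : IsOpen Ω)
    (T : ℝ) (hT : 0 < T)
    (h : ∀ x ∈ Ω, tauP Ω Φ x < ENNReal.ofReal T) :
    ∀ x ∈ Ω, tauM Ω Φ x < ENNReal.ofReal T := by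
  intro x hx
  by_contra hcon
  push_neg at hcon
  -- backward trajectory stays in Ω on (0,T)
  have hback : ∀ r : ℝ, 0 < r → r < T → Φ x (-r) ∈ Ω := by
    intro r hr0 hrT
    by_contra hout
    have hle : tauM Ω Φ x ≤ ENNReal.ofReal r := sInf_le ⟨r, hr0, rfl, hout⟩
    have : ENNReal.ofReal r < ENNReal.ofReal T := by
      exact (ENNReal.ofReal_lt_ofReal_iff hT).2 hrT
    exact absurd (lt_of_le_of_lt hle this) (not_lt.2 hcon)
  -- continuity at 0 : small times stay in Ω
  obtain ⟨δ, hδ0, hδ⟩ : ∃ δ > 0, ∀ r : ℝ, |r| < δ → Φ x r ∈ Ω := by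
    have hmem : Φ x ⁻¹' Ω ∈ 𝓝 (0 : ℝ) := by
      apply (hc x).continuousAt.preimage_mem_nhds
      rw [hΦ0 x]
      exact hΩ.mem_nhds hx
    rcases Metric.mem_nhds_iff.1 hmem with ⟨δ, hδ0, hδ⟩
    exact ⟨δ, hδ0, fun r hr => hδ (by simpa [Real.dist_eq] using hr)⟩
  set ε : ℝ := min δ T / 2 with hε
  have hε0 : 0 < ε := by positivity
  have hεδ : ε < δ := by rw [hε]; have := min_le_left δ T; linarith
  have hεT : ε < T := by rw [hε]; have := min_le_right δ T; linarith
  set t : ℝ := T - ε with ht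
  have ht0 : 0 < t := by rw [ht]; linarith
  have htT : t < T := by rw [ht]; linarith
  have hy : Φ x (-t) ∈ Ω := hback t ht0 htT
  -- forward exit of y before T
  have hyP := h _ hy
  obtain ⟨s, hsmem, hslt⟩ := exists_lt_of_csInf_lt
    (show {s : ℝ≥0∞ | ∃ r : ℝ, 0 < r ∧ s = ENNReal.ofReal r ∧ Φ (Φ x (-t)) r ∉ Ω}.Nonempty from
      by
        by_contra hemp
        rw [Set.not_nonempty_iff_eq_empty] at hemp
        simp only [tauP, hemp, sInf_empty] at hyP
        exact absurd hyP (by simp)) hyP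
  obtain ⟨r, hr0, rfl, hout⟩ := hsmem
  have hrT : r < T := by
    by_contra hge
    push_neg at hge
    exact absurd hslt (not_lt.2 ((ENNReal.ofReal_le_ofReal hge)))
  have heq : Φ (Φ x (-t)) r = Φ x (r - t) := by
    rw [hg]; ring_nf
  rw [heq] at hout
  rcases lt_trichotomy r t with hlt | heqq | hgt
  · exact hout (by
      have := hback (t - r) (by linarith) (by linarith)
      simpa [neg_sub] using this)
  · exact hout (by simp [heqq, hΦ0, hx])
  · exact hout (hδ (r - t) (by rw [abs_of_pos (by linarith)]; linarith))

theorem stmt_2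
    {N : ℕ} (hN : 1 ≤ N) (κ : ℝ≥0) (hκ : 0 < κ)
    (F : (Fin N → ℝ) → (Fin N → ℝ)) (hF : LipschitzWith κ F)
    (Φ : (Fin N → ℝ) → ℝ → (Fin N → ℝ))
    (hΦ0 : ∀ x, Φ x 0 = x)
    (hΦ' : ∀ x s, HasDerivAt (Φ x) (F (Φ x s)) s)
    (Ω : Set (Fin N → ℝ)) (hΩ : IsOpen Ω)
    (T : ℝ) (hT : 0 < T) :
    (∀ x ∈ Ω, tauP Ω Φ x < ENNReal.ofReal T) ↔ (∀ x ∈ Ω, tauM Ω Φ x < ENNReal.ofReal T) := by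
  have hc : ∀ x, Continuous (Φ x) := fun x =>
    continuous_iff_continuousAt.2 fun s => (hΦ' x s).continuousAt
  -- group law via uniqueness of ODE solutions
  have hg : ∀ x t s, Φ (Φ x t) s = Φ x (t + s) := by
    intro x t s
    set a : ℝ := -(|s| + 1) with ha
    set b : ℝ := |s| + 1 with hb
    have habs := abs_nonneg s
    have hs : s ∈ Icc a b :=
      ⟨by rw [ha]; have := neg_abs_le s; linarith, by rw [hb]; have := le_abs_self s; linarith⟩
    have h0 : (0 : ℝ) ∈ Ioo a b := ⟨by rw [ha]; linarith, by rw [hb]; linarith⟩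
    have key : EqOn (fun u => Φ (Φ x t) u) (fun u => Φ x (t + u)) (Icc a b) := by
      apply ODE_solution_unique_of_mem_Icc
        (v := fun (_ : ℝ) y => F y) (s := fun _ => (Set.univ : Set (Fin N → ℝ)))
        (K := κ) (fun _ _ => hF.lipschitzOnWith) h0
      · exact (hc _).continuousOn
      · intro u _; exact hΦ' _ u
      · intro u _; trivial
      · exact ((hc x).comp (continuous_const.add continuous_id)).continuousOn
      · intro u _
        have h1 : HasDerivAt (fun u : ℝ => t + u) 1 u := by
          simpa using (hasDerivAt_id u).const_add t
        have := (hΦ' x (t + u)).scomp u h1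
        simpa [Function.comp_def] using this
      · intro u _; trivial
      · simp [hΦ0]
    exact key hs
  constructor
  · intro h
    exact stmt2_aux Φ hΦ0 hg hc Ω hΩ T hT h
  · intro h x hx
    -- apply the aux lemma to the time-reversed flow
    set Ψ : (Fin N → ℝ) → ℝ → (Fin N → ℝ) := fun y s => Φ y (-s) with hΨ
    have hP : ∀ y, tauP Ω Ψ y = tauM Ω Φ y := fun y => rfl
    have hM : ∀ y, tauM Ω Ψ y = tauP Ω Φ y := by
      intro y
      unfold tauM tauP
      congr 1
      ext u
      simp [hΨ]
    have := stmt2_aux Ψ (fun y => by simp [hΨ, hΦ0])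
      (fun y t s => by simp only [hΨ]; rw [hg]; congr 1; ring) (fun y => (hc y).comp continuous_neg)
      Ω hΩ T hT (fun y hy => by rw [hP]; exact h y hy) x hx
    rwa [hM] at this

end
end

section
/- For every f ∈ L¹(Ω,μ) and every n ≥ 1, the function ϱ_n ⋄ f is measurable, finite μ-almost everywhere, and belongs to L¹(Ω,μ), with ‖ϱ_n ⋄ f‖_{L¹(Ω,μ)} ≤ ‖f‖_{L¹(Ω,μ)}. -/
open MeasureTheory Set Filter Topology
open scoped ENNReal NNReal

noncomputable section

section molAux

lemma ode_unique_fwd {N : ℕ} {κ : ℝ≥0} {G : (Fin N → ℝ) → (Fin N → ℝ)}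
    (hG : LipschitzWith κ G) (f g : ℝ → (Fin N → ℝ))
    (hf : ∀ s, HasDerivAt f (G (f s)) s) (hg : ∀ s, HasDerivAt g (G (g s)) s)
    (h0 : f 0 = g 0) {t : ℝ} (ht : 0 ≤ t) : f t = g t := by
  have := ODE_solution_unique (v := fun _ y => G y) (K := κ) (f := f) (g := g)
    (a := 0) (b := t) (fun _ => hG)
    (fun s _ => ((hf s).continuousAt).continuousWithinAt)
    (fun s _ => (hf s).hasDerivWithinAt)
    (fun s _ => ((hg s).continuousAt).continuousWithinAt)
    (fun s _ => (hg s).hasDerivWithinAt) h0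
  exact this ⟨ht, le_refl t⟩

lemma ode_unique {N : ℕ} {κ : ℝ≥0} {G : (Fin N → ℝ) → (Fin N → ℝ)}
    (hG : LipschitzWith κ G) (f g : ℝ → (Fin N → ℝ))
    (hf : ∀ s, HasDerivAt f (G (f s)) s) (hg : ∀ s, HasDerivAt g (G (g s)) s)
    (h0 : f 0 = g 0) (t : ℝ) : f t = g t := by
  rcases le_or_gt 0 t with ht | ht
  · exact ode_unique_fwd hG f g hf hg h0 ht
  · have hG' : LipschitzWith κ (fun y => -G y) := by
      have : (fun y => -G y) = (fun z => -z) ∘ G := rfl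
      rw [this]
      exact (LipschitzWith.id.neg).comp hG |>.weaken (by simp)
    have hf' : ∀ s, HasDerivAt (fun s => f (-s)) (-(G (f (-s)))) s := by
      intro s
      have := (hf (-s)).scomp s (hasDerivAt_neg s)
      simpa [Function.comp_def] using this
    have hg' : ∀ s, HasDerivAt (fun s => g (-s)) (-(G (g (-s)))) s := by
      intro s
      have := (hg (-s)).scomp s (hasDerivAt_neg s)
      simpa [Function.comp_def] using this
    have := ode_unique_fwd hG' (fun s => f (-s)) (fun s => g (-s)) hf' hg'
      (by simpa using h0) (t := -t) (by linarith)
    simpa using this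

variable {N : ℕ} {κ : ℝ≥0} {F : (Fin N → ℝ) → (Fin N → ℝ)}
  {Φ : (Fin N → ℝ) → ℝ → (Fin N → ℝ)} {Ω : Set (Fin N → ℝ)}

lemma flow_group' (hF : LipschitzWith κ F) (hΦ0 : ∀ x, Φ x 0 = x)
    (hΦ' : ∀ x s, HasDerivAt (Φ x) (F (Φ x s)) s) (x : Fin N → ℝ) (t u : ℝ) :
    Φ (Φ x t) u = Φ x (t + u) := by
  refine ode_unique hF (fun u => Φ (Φ x t) u) (fun u => Φ x (t + u))
    (fun s => hΦ' (Φ x t) s) (fun s => ?_) (by simp [hΦ0]) u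
  have := (hΦ' x (t + s)).scomp s ((hasDerivAt_id s).const_add t)
  simpa [Function.comp_def] using this

lemma flow_dist_fwd (hF : LipschitzWith κ F) (hΦ0 : ∀ x, Φ x 0 = x)
    (hΦ' : ∀ x s, HasDerivAt (Φ x) (F (Φ x s)) s) (x y : Fin N → ℝ) {t : ℝ}
    (ht : 0 ≤ t) : dist (Φ x t) (Φ y t) ≤ dist x y * Real.exp (κ * t) := by
  have := dist_le_of_trajectories_ODE (v := fun _ y => F y) (K := κ)
    (f := Φ x) (g := Φ y) (a := 0) (b := t) (δ := dist x y) (fun _ => hF)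
    (fun s _ => ((hΦ' x s).continuousAt).continuousWithinAt)
    (fun s _ => (hΦ' x s).hasDerivWithinAt)
    (fun s _ => ((hΦ' y s).continuousAt).continuousWithinAt)
    (fun s _ => (hΦ' y s).hasDerivWithinAt) (by simp [hΦ0])
  simpa using this t ⟨ht, le_refl t⟩

lemma flow_dist (hF : LipschitzWith κ F) (hΦ0 : ∀ x, Φ x 0 = x)
    (hΦ' : ∀ x s, HasDerivAt (Φ x) (F (Φ x s)) s) (x y : Fin N → ℝ) (t : ℝ) :
    dist (Φ x t) (Φ y t) ≤ dist x y * Real.exp (κ * |t|) := by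
  rcases le_or_gt 0 t with ht | ht
  · rw [abs_of_nonneg ht]; exact flow_dist_fwd hF hΦ0 hΦ' x y ht
  · have hF' : LipschitzWith κ (fun y => -F y) := by
      have : (fun y => -F y) = (fun z => -z) ∘ F := rfl
      rw [this]; exact (LipschitzWith.id.neg).comp hF |>.weaken (by simp)
    have key : ∀ z : Fin N → ℝ, ∀ s : ℝ,
        HasDerivAt (fun s => Φ z (-s)) ((fun y => -F y) ((fun s => Φ z (-s)) s)) s := by
      intro z s
      have := (hΦ' z (-s)).scomp s (hasDerivAt_neg s)
      simpa [Function.comp_def] using this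
    have := dist_le_of_trajectories_ODE (v := fun _ y => -F y) (K := κ)
      (f := fun s => Φ x (-s)) (g := fun s => Φ y (-s)) (a := 0) (b := -t)
      (δ := dist x y) (fun _ => hF')
      (fun s _ => (((key x s)).continuousAt).continuousWithinAt)
      (fun s _ => (key x s).hasDerivWithinAt)
      (fun s _ => (((key y s)).continuousAt).continuousWithinAt)
      (fun s _ => (key y s).hasDerivWithinAt) (by simp [hΦ0])
    have h2 := this (-t) ⟨by linarith, le_refl _⟩
    rw [abs_of_neg ht]
    simpa using h2

lemma flow_cont_time {F : (Fin N → ℝ) → (Fin N → ℝ)}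
    (hΦ' : ∀ x s, HasDerivAt (Φ x) (F (Φ x s)) s) (x : Fin N → ℝ) :
    Continuous (Φ x) :=
  continuous_iff_continuousAt.2 fun s => (hΦ' x s).continuousAt

lemma flow_jointCont' (hF : LipschitzWith κ F) (hΦ0 : ∀ x, Φ x 0 = x)
    (hΦ' : ∀ x s, HasDerivAt (Φ x) (F (Φ x s)) s) :
    Continuous (fun p : (Fin N → ℝ) × ℝ => Φ p.1 p.2) := by
  rw [continuous_iff_continuousAt]
  rintro ⟨x₀, t₀⟩
  rw [ContinuousAt, tendsto_iff_dist_tendsto_zero]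
  have hb : ∀ p : (Fin N → ℝ) × ℝ,
      dist (Φ p.1 p.2) (Φ x₀ t₀) ≤ dist p.1 x₀ * Real.exp (κ * |p.2|)
        + dist (Φ x₀ p.2) (Φ x₀ t₀) := by
    intro p
    calc dist (Φ p.1 p.2) (Φ x₀ t₀) ≤ dist (Φ p.1 p.2) (Φ x₀ p.2)
        + dist (Φ x₀ p.2) (Φ x₀ t₀) := dist_triangle _ _ _
      _ ≤ _ := by
        gcongr
        exact flow_dist hF hΦ0 hΦ' p.1 x₀ p.2
  refine squeeze_zero (fun p => dist_nonneg) hb ?_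
  have h1 : Tendsto (fun p : (Fin N → ℝ) × ℝ => dist p.1 x₀ * Real.exp (κ * |p.2|))
      (𝓝 (x₀, t₀)) (𝓝 (0 * Real.exp (κ * |t₀|))) := by
    apply Tendsto.mul
    · exact (continuous_fst.dist continuous_const).tendsto' _ _ (by simp)
    · exact ((Real.continuous_exp.comp ((continuous_const.mul
        (continuous_abs.comp continuous_snd))))).tendsto' _ _ rfl
  have h2 : Tendsto (fun p : (Fin N → ℝ) × ℝ => dist (Φ x₀ p.2) (Φ x₀ t₀))
      (𝓝 (x₀, t₀)) (𝓝 0) := by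
    have : Continuous fun p : (Fin N → ℝ) × ℝ => dist (Φ x₀ p.2) (Φ x₀ t₀) :=
      (((flow_cont_time hΦ' x₀).comp continuous_snd).dist continuous_const)
    exact this.tendsto' _ _ (by simp)
  simpa using h1.add h2

lemma flow_cont_space (hF : LipschitzWith κ F) (hΦ0 : ∀ x, Φ x 0 = x)
    (hΦ' : ∀ x s, HasDerivAt (Φ x) (F (Φ x s)) s) (t : ℝ) :
    Continuous (fun x => Φ x t) :=
  (flow_jointCont' hF hΦ0 hΦ').comp (continuous_id.prodMk continuous_const)

lemma flow_measurePreserving' (hF : LipschitzWith κ F) (hΦ0 : ∀ x, Φ x 0 = x)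
    (hΦ' : ∀ x s, HasDerivAt (Φ x) (F (Φ x s)) s) (μ : Measure (Fin N → ℝ))
    (hinv : ∀ (A : Set (Fin N → ℝ)) (t : ℝ), MeasurableSet A →
      μ ((fun x => Φ x t) '' A) = μ A) (t : ℝ) :
    MeasurePreserving (fun x => Φ x t) μ μ := by
  refine ⟨(flow_cont_space hF hΦ0 hΦ' t).measurable, ?_⟩
  ext B hB
  rw [Measure.map_apply (flow_cont_space hF hΦ0 hΦ' t).measurable hB]
  have himg : (fun x => Φ x t) ⁻¹' B = (fun x => Φ x (-t)) '' B := by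
    ext y
    constructor
    · intro hy
      refine ⟨Φ y t, hy, ?_⟩
      show Φ (Φ y t) (-t) = y
      rw [flow_group' hF hΦ0 hΦ' y t (-t)]; simp [hΦ0]
    · rintro ⟨b, hb, rfl⟩
      simpa [flow_group' hF hΦ0 hΦ' b (-t) t, hΦ0] using hb
  rw [himg, hinv B (-t) hB]

lemma mem_of_lt_tauM' {x : Fin N → ℝ} {s : ℝ} (hs : 0 < s)
    (h : ENNReal.ofReal s < tauM Ω Φ x) : Φ x (-s) ∈ Ω := by
  by_contra hmem
  exact absurd (sInf_le ⟨s, hs, rfl, hmem⟩ : tauM Ω Φ x ≤ ENNReal.ofReal s)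
    (not_le.2 h)

lemma tauM_lt_iff {x : Fin N → ℝ} {s : ℝ} (hs : 0 ≤ s) :
    ENNReal.ofReal s < tauM Ω Φ x ↔
      ∃ q : ℚ, s < (q : ℝ) ∧ ∀ r : ℝ, 0 < r → r ≤ (q : ℝ) → Φ x (-r) ∈ Ω := by
  constructor
  · intro h
    obtain ⟨q, hq1, hq2⟩ : ∃ q : ℚ, s < (q : ℝ) ∧ ENNReal.ofReal q < tauM Ω Φ x := by
      rcases eq_top_or_lt_top (tauM Ω Φ x) with htop | hlt
      · obtain ⟨q, hq⟩ := exists_rat_gt s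
        exact ⟨q, hq, by simp [htop]⟩
      · have hst : s < (tauM Ω Φ x).toReal := by
          have := (ENNReal.ofReal_lt_iff_lt_toReal hs hlt.ne).mp h
          exact this
        obtain ⟨q, hq1, hq2⟩ := exists_rat_btwn hst
        refine ⟨q, hq1, ?_⟩
        rw [ENNReal.ofReal_lt_iff_lt_toReal (le_trans hs hq1.le) hlt.ne]
        exact hq2
    refine ⟨q, hq1, fun r hr hrq => ?_⟩
    by_contra hmem
    exact absurd (sInf_le ⟨r, hr, rfl, hmem⟩ : tauM Ω Φ x ≤ ENNReal.ofReal r)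
      (not_le.2 (lt_of_le_of_lt (ENNReal.ofReal_le_ofReal hrq) hq2))
  · rintro ⟨q, hq1, hq2⟩
    have hle : ENNReal.ofReal q ≤ tauM Ω Φ x := by
      refine le_sInf ?_
      rintro _ ⟨r, hr, rfl, hmem⟩
      refine ENNReal.ofReal_le_ofReal ?_
      by_contra hlt
      exact hmem (hq2 r hr (le_of_not_ge hlt))
    exact lt_of_lt_of_le ((ENNReal.ofReal_lt_ofReal_iff (lt_of_le_of_lt hs hq1)).2 hq1) hle

lemma Gq_measurable (hF : LipschitzWith κ F) (hΦ0 : ∀ x, Φ x 0 = x)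
    (hΦ' : ∀ x s, HasDerivAt (Φ x) (F (Φ x s)) s) (hΩ : IsOpen Ω) (q : ℝ) :
    MeasurableSet {x : Fin N → ℝ | ∀ r : ℝ, 0 < r → r ≤ q → Φ x (-r) ∈ Ω} := by
  rcases le_or_gt q 0 with hq | hq
  · have : {x : Fin N → ℝ | ∀ r : ℝ, 0 < r → r ≤ q → Φ x (-r) ∈ Ω} = univ := by
      ext x; simp only [mem_setOf_eq, mem_univ, iff_true]
      intro r hr hrq; linarith
    rw [this]; exact MeasurableSet.univ
  · have hdecomp : {x : Fin N → ℝ | ∀ r : ℝ, 0 < r → r ≤ q → Φ x (-r) ∈ Ω}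
        = ⋂ k : ℕ, {x | ∀ r ∈ Icc (q / (k + 2)) q, Φ x (-r) ∈ Ω} := by
      ext x
      simp only [mem_setOf_eq, mem_iInter, mem_Icc]
      constructor
      · intro h k r ⟨h1, h2⟩
        exact h r (lt_of_lt_of_le (by positivity) h1) h2
      · intro h r hr hrq
        obtain ⟨k, hk⟩ := exists_nat_gt (q / r)
        refine h k r ⟨?_, hrq⟩
        rw [div_le_iff₀ (by positivity : (0:ℝ) < (k:ℝ) + 2)]
        calc q = (q / r) * r := by field_simp
          _ ≤ ((k:ℝ) + 2) * r := by
            apply mul_le_mul_of_nonneg_right _ hr.le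
            linarith [hk]
          _ = r * ((k:ℝ) + 2) := by ring
    rw [hdecomp]
    refine MeasurableSet.iInter fun k => ?_
    have : IsOpen {x : Fin N → ℝ | ∀ r ∈ Icc (q / (k + 2)) q, Φ x (-r) ∈ Ω} := by
      rw [isOpen_iff_mem_nhds]
      intro x₀ hx₀
      have hU : IsOpen ((fun p : (Fin N → ℝ) × ℝ => Φ p.1 (-p.2)) ⁻¹' Ω) :=
        hΩ.preimage ((flow_jointCont' hF hΦ0 hΦ').comp
          (continuous_fst.prodMk continuous_snd.neg))
      have hsub : ({x₀} : Set (Fin N → ℝ)) ×ˢ Icc (q / (k + 2)) q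
          ⊆ (fun p : (Fin N → ℝ) × ℝ => Φ p.1 (-p.2)) ⁻¹' Ω := by
        rintro ⟨x, r⟩ ⟨hx, hr⟩
        simp only [mem_singleton_iff] at hx
        subst hx
        exact hx₀ r hr
      obtain ⟨u, v, hu, hv, hxu, hIv, huv⟩ := generalized_tube_lemma
        isCompact_singleton isCompact_Icc hU hsub
      refine mem_of_superset (hu.mem_nhds (hxu rfl)) ?_
      intro x hx r hr
      exact huv (Set.mk_mem_prod hx (hIv hr))
    exact this.measurableSet

lemma B_measurable' (hF : LipschitzWith κ F) (hΦ0 : ∀ x, Φ x 0 = x)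
    (hΦ' : ∀ x s, HasDerivAt (Φ x) (F (Φ x s)) s) (hΩ : IsOpen Ω) :
    MeasurableSet {p : (Fin N → ℝ) × ℝ | 0 < p.2 ∧ ENNReal.ofReal p.2 < tauM Ω Φ p.1} := by
  have hdecomp : {p : (Fin N → ℝ) × ℝ | 0 < p.2 ∧ ENNReal.ofReal p.2 < tauM Ω Φ p.1}
      = ⋃ q : ℚ, ({x : Fin N → ℝ | ∀ r : ℝ, 0 < r → r ≤ (q:ℝ) → Φ x (-r) ∈ Ω}
          ×ˢ {s : ℝ | 0 < s ∧ s < (q:ℝ)}) := by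
    ext ⟨x, s⟩
    simp only [mem_setOf_eq, mem_iUnion, mem_prod]
    constructor
    · rintro ⟨hs, h⟩
      obtain ⟨q, hq1, hq2⟩ := (tauM_lt_iff (Ω := Ω) (Φ := Φ) hs.le).mp h
      exact ⟨q, hq2, hs, hq1⟩
    · rintro ⟨q, hq2, hs, hq1⟩
      exact ⟨hs, (tauM_lt_iff hs.le).mpr ⟨q, hq1, hq2⟩⟩
  rw [hdecomp]
  refine MeasurableSet.iUnion fun q => (Gq_measurable hF hΦ0 hΦ' hΩ (q : ℝ)).prod ?_
  have : {s : ℝ | 0 < s ∧ s < (q:ℝ)} = Ioo 0 (q:ℝ) := rfl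
  rw [this]; exact measurableSet_Ioo

end molAux

theorem stmt_8
    {N : ℕ} (hN : 1 ≤ N) (κ : ℝ≥0) (hκ : 0 < κ)
    (F : (Fin N → ℝ) → (Fin N → ℝ)) (hF : LipschitzWith κ F)
    (Φ : (Fin N → ℝ) → ℝ → (Fin N → ℝ))
    (hΦ0 : ∀ x, Φ x 0 = x)
    (hΦ' : ∀ x s, HasDerivAt (Φ x) (F (Φ x s)) s)
    (Ω : Set (Fin N → ℝ)) (hΩ : IsOpen Ω)
    (μ : Measure (Fin N → ℝ)) [IsFiniteMeasureOnCompacts μ]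
    (hinv : ∀ (A : Set (Fin N → ℝ)) (t : ℝ), MeasurableSet A →
      μ ((fun x => Φ x t) '' A) = μ A)
    (ρ : ℕ → ℝ → ℝ) (hρ : IsMollifier ρ)
    (f : (Fin N → ℝ) → ℝ) (hf : Integrable f (μ.restrict Ω)) (n : ℕ) :
    AEStronglyMeasurable (moll Ω Φ (ρ n) f) (μ.restrict Ω) ∧
    (∀ᵐ x ∂μ.restrict Ω, IntegrableOn (fun s => ρ n s * f (Φ x (-s)))
        {s : ℝ | 0 < s ∧ ENNReal.ofReal s < tauM Ω Φ x} volume) ∧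
    Integrable (moll Ω Φ (ρ n) f) (μ.restrict Ω) ∧
    ∫ x in Ω, |moll Ω Φ (ρ n) f x| ∂μ ≤ ∫ x in Ω, |f x| ∂μ := by
  obtain ⟨hρc, hρ0, hρsupp, hρint⟩ := hρ n
  have hΩm : MeasurableSet Ω := hΩ.measurableSet
  set μΩ := μ.restrict Ω with hμΩ
  set ν := μΩ.prod (volume : Measure ℝ) with hν
  obtain ⟨g, hg, hfg⟩ := hf.aestronglyMeasurable
  set B := {p : (Fin N → ℝ) × ℝ | 0 < p.2 ∧ ENNReal.ofReal p.2 < tauM Ω Φ p.1} with hBdef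
  have hB : MeasurableSet B := B_measurable' hF hΦ0 hΦ' hΩ
  have hjc : Continuous (fun p : (Fin N → ℝ) × ℝ => Φ p.1 (-p.2)) :=
    (flow_jointCont' hF hΦ0 hΦ').comp (continuous_fst.prodMk continuous_snd.neg)
  set Fint := B.indicator (fun p : (Fin N → ℝ) × ℝ => ρ n p.2 * f (Φ p.1 (-p.2))) with hFdef
  set Gint := B.indicator (fun p : (Fin N → ℝ) × ℝ => ρ n p.2 * g (Φ p.1 (-p.2))) with hGdef
  have hGm : StronglyMeasurable Gint :=
    (((hρc.continuous.comp continuous_snd).stronglyMeasurable).mul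
      (hg.comp_measurable hjc.measurable)).indicator hB
  -- null set
  have hnull : μ ({y | f y ≠ g y} ∩ Ω) = 0 := by
    have := ae_iff.mp hfg
    rwa [hμΩ, Measure.restrict_apply' hΩm] at this
  obtain ⟨N', hNsub, hNm, hN0⟩ := exists_measurable_superset_of_null hnull
  set E := {p : (Fin N → ℝ) × ℝ | Φ p.1 (-p.2) ∈ N'} with hEdef
  have hEm : MeasurableSet E := hjc.measurable hNm
  have hE0 : ν E = 0 := by
    rw [hν, Measure.prod_apply_symm hEm]
    have : ∀ s : ℝ, μΩ ((fun x => (x, s)) ⁻¹' E) = 0 := by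
      intro s
      have hpre : (fun x => (x, s)) ⁻¹' E = (fun x => Φ x (-s)) ⁻¹' N' := rfl
      rw [hpre, hμΩ]
      refine le_antisymm ?_ zero_le
      calc μ.restrict Ω ((fun x => Φ x (-s)) ⁻¹' N')
          ≤ μ ((fun x => Φ x (-s)) ⁻¹' N') := Measure.restrict_le_self _
        _ = μ N' := (flow_measurePreserving' hF hΦ0 hΦ' μ hinv (-s)).measure_preimage
            hNm.nullMeasurableSet
        _ = 0 := hN0
    simp [this]
  have hFG : Fint =ᵐ[ν] Gint := by
    refine measure_mono_null ?_ hE0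
    intro p hp
    simp only [mem_setOf_eq] at hp
    by_contra hpE
    apply hp
    rcases Classical.em (p ∈ B) with hpB | hpB
    · have hmem : Φ p.1 (-p.2) ∈ Ω := mem_of_lt_tauM' hpB.1 hpB.2
      have : f (Φ p.1 (-p.2)) = g (Φ p.1 (-p.2)) := by
        by_contra hne
        exact hpE (hNsub ⟨hne, hmem⟩)
      simp [hFdef, hGdef, indicator_of_mem hpB, this]
    · simp [hFdef, hGdef, indicator_of_notMem hpB]
  have hFaesm : AEStronglyMeasurable Fint ν := ⟨Gint, hGm, hFG⟩
  set I := ∫⁻ y, ‖f y‖₊ ∂μΩ with hIdef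
  have hIg : ∫⁻ y, ‖g y‖₊ ∂μΩ = I := by
    refine lintegral_congr_ae (hfg.mono fun y hy => ?_)
    simp [hy]
  have hIfin : I < ⊤ := hf.hasFiniteIntegral
  -- key bound
  have key : ∫⁻ p, ‖Fint p‖₊ ∂ν ≤ I := by
    have h1 : ∫⁻ p, ‖Fint p‖₊ ∂ν = ∫⁻ p, ‖Gint p‖₊ ∂ν :=
      lintegral_congr_ae (hFG.mono fun p hp => by simp only [hp])
    rw [h1, hν, lintegral_prod_symm (fun p => (‖Gint p‖₊ : ℝ≥0∞)) (hGm.measurable.enorm.aemeasurable)]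
    have inner : ∀ s : ℝ, ∫⁻ x, ‖Gint (x, s)‖₊ ∂μΩ ≤ ENNReal.ofReal (ρ n s) * I := by
      intro s
      have hb : ∀ x, (‖Gint (x, s)‖₊ : ℝ≥0∞) ≤
          ENNReal.ofReal (ρ n s) * (Ω.indicator (fun y => (‖g y‖₊ : ℝ≥0∞)) (Φ x (-s))) := by
        intro x
        rcases Classical.em ((x, s) ∈ B) with hxB | hxB
        · have hmem : Φ x (-s) ∈ Ω := mem_of_lt_tauM' hxB.1 hxB.2
          rw [hGdef, indicator_of_mem hxB, indicator_of_mem hmem,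
            nnnorm_mul, ENNReal.coe_mul, ← enorm_eq_nnnorm (ρ n s), Real.enorm_eq_ofReal (hρ0 s)]
        · rw [hGdef, indicator_of_notMem hxB]
          simp
      calc ∫⁻ x, ‖Gint (x, s)‖₊ ∂μΩ
          ≤ ∫⁻ x, ENNReal.ofReal (ρ n s) *
              (Ω.indicator (fun y => (‖g y‖₊ : ℝ≥0∞)) (Φ x (-s))) ∂μΩ :=
            lintegral_mono hb
        _ ≤ ∫⁻ x, ENNReal.ofReal (ρ n s) *
              (Ω.indicator (fun y => (‖g y‖₊ : ℝ≥0∞)) (Φ x (-s))) ∂μ :=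
            lintegral_mono' Measure.restrict_le_self le_rfl
        _ = ENNReal.ofReal (ρ n s) *
              ∫⁻ x, Ω.indicator (fun y => (‖g y‖₊ : ℝ≥0∞)) (Φ x (-s)) ∂μ := by
            rw [lintegral_const_mul]
            exact (hg.measurable.enorm.indicator hΩm).comp
              ((flow_measurePreserving' hF hΦ0 hΦ' μ hinv (-s)).measurable)
        _ = ENNReal.ofReal (ρ n s) * ∫⁻ y, Ω.indicator (fun y => (‖g y‖₊ : ℝ≥0∞)) y ∂μ := by
            rw [(flow_measurePreserving' hF hΦ0 hΦ' μ hinv (-s)).lintegral_comp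
              (show Measurable (Ω.indicator (fun y => (‖g y‖₊ : ℝ≥0∞))) from
                hg.measurable.enorm.indicator hΩm)]
        _ = ENNReal.ofReal (ρ n s) * ∫⁻ y, (‖g y‖₊ : ℝ≥0∞) ∂μΩ := by
            rw [lintegral_indicator hΩm]
        _ = ENNReal.ofReal (ρ n s) * I := by rw [hIg]
    calc ∫⁻ s, ∫⁻ x, ‖Gint (x, s)‖₊ ∂μΩ ∂volume
        ≤ ∫⁻ s, ENNReal.ofReal (ρ n s) * I ∂volume := lintegral_mono inner
      _ = (∫⁻ s, ENNReal.ofReal (ρ n s) ∂volume) * I := by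
          rw [← lintegral_mul_const]
          exact (ENNReal.measurable_ofReal.comp hρc.continuous.measurable)
      _ = ENNReal.ofReal (∫ s, ρ n s) * I := by
          rw [ofReal_integral_eq_lintegral_ofReal ?_ (Eventually.of_forall hρ0)]
          · exact hρc.continuous.integrable_of_hasCompactSupport
              (HasCompactSupport.intro isCompact_Icc hρsupp)
      _ = I := by rw [hρint]; simp
  have hFint : Integrable Fint ν := ⟨hFaesm, key.trans_lt hIfin⟩
  -- moll as a product integral
  have hBx : ∀ x : Fin N → ℝ,
      MeasurableSet {s : ℝ | 0 < s ∧ ENNReal.ofReal s < tauM Ω Φ x} :=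
    fun x => measurable_prodMk_left hB
  have moll_eq : ∀ x, moll Ω Φ (ρ n) f x = ∫ s, Fint (x, s) ∂volume := by
    intro x
    have hind : (fun s => Fint (x, s))
        = ({s : ℝ | 0 < s ∧ ENNReal.ofReal s < tauM Ω Φ x}).indicator
            (fun s => ρ n s * f (Φ x (-s))) := by
      funext s
      rcases Classical.em ((x, s) ∈ B) with hxB | hxB
      · rw [hFdef, indicator_of_mem hxB, indicator_of_mem (by exact hxB)]
      · rw [hFdef, indicator_of_notMem hxB, indicator_of_notMem (by exact hxB)]
    rw [moll, curveInt, ← integral_indicator (hBx x), ← hind]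
  refine ⟨?_, ?_, ?_, ?_⟩
  · have := hFaesm.integral_prod_right'
    refine this.congr (Eventually.of_forall fun x => ?_)
    exact (moll_eq x).symm
  · refine (hFint.prod_right_ae).mono fun x hx => ?_
    have hind : (fun s => Fint (x, s))
        = ({s : ℝ | 0 < s ∧ ENNReal.ofReal s < tauM Ω Φ x}).indicator
            (fun s => ρ n s * f (Φ x (-s))) := by
      funext s
      rcases Classical.em ((x, s) ∈ B) with hxB | hxB
      · rw [hFdef, indicator_of_mem hxB, indicator_of_mem (by exact hxB)]
      · rw [hFdef, indicator_of_notMem hxB, indicator_of_notMem (by exact hxB)]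
    rw [hind] at hx
    exact (integrable_indicator_iff (hBx x)).mp hx
  · have := hFint.integral_prod_left
    refine this.congr (Eventually.of_forall fun x => (moll_eq x).symm)
  · -- final bound
    have hmollint : Integrable (moll Ω Φ (ρ n) f) μΩ := by
      have := hFint.integral_prod_left
      exact this.congr (Eventually.of_forall fun x => (moll_eq x).symm)
    have step1 : ∫ x in Ω, |moll Ω Φ (ρ n) f x| ∂μ
        = (∫⁻ x, ‖moll Ω Φ (ρ n) f x‖₊ ∂μΩ).toReal := by
      simp only [← enorm_eq_nnnorm]
      rw [← integral_norm_eq_lintegral_enorm hmollint.aestronglyMeasurable]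
      simp [Real.norm_eq_abs, hμΩ]
    have step2 : ∫ x in Ω, |f x| ∂μ = I.toReal := by
      rw [hIdef]
      simp only [← enorm_eq_nnnorm]
      rw [← integral_norm_eq_lintegral_enorm hf.aestronglyMeasurable]
      simp [Real.norm_eq_abs, hμΩ]
    rw [step1, step2]
    refine ENNReal.toReal_mono hIfin.ne ?_
    calc ∫⁻ x, ‖moll Ω Φ (ρ n) f x‖₊ ∂μΩ
        ≤ ∫⁻ x, ∫⁻ s, ‖Fint (x, s)‖₊ ∂volume ∂μΩ := by
          refine lintegral_mono fun x => ?_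
          rw [moll_eq x]
          exact enorm_integral_le_lintegral_enorm _
      _ = ∫⁻ p, ‖Fint p‖₊ ∂ν := (lintegral_prod _ hFaesm.enorm).symm
      _ ≤ I := key

end
end
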